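/- The averaged translated indicators are identically 1 on the corresponding intervals: let ω_1 := ∫_0^1 z^{2α+1} dz. For every x ∈ [0,1), (1/ω_1)·∫_0^1 τ_x 1_{[0,2]}(y)·y^{2α+1} dy = 1, and for every integer n ≥ 2 and every x ∈ [n−1, n), (1/ω_1)·∫_0^1 τ_x 1_{[n−2,n+1]}(y)·y^{2α+1} dy = 1. -/

import Mathlib

open MeasureTheory Real Set ENNReal ComplexOrder

noncomputable section

/-- The Haar measure `ω_α(dz) = z^(2α+1) dz` of the Bessel–Kingman hypergroup,
supported on `(0, ∞)`. -/
def omegaM (α : ℝ) : Measure ℝ :=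
  (volume.restrict (Set.Ioi (0:ℝ))).withDensity fun z => ENNReal.ofReal (z ^ (2*α+1))

/-- The interval `I_{n+1} = [n, n+1)` (0-based reindexing of the paper's `I_n = [n-1, n)`). -/
def In (n : ℕ) : Set ℝ := Set.Ico (n : ℝ) ((n : ℝ) + 1)

/-- `ω_α`-measure of the `n`-th interval. -/
def wn (α : ℝ) (n : ℕ) : ℝ≥0∞ := omegaM α (In n)

/-- The discrete amalgam norm `‖f‖_{p,q}` (with the conventions of the paper for
`p = ∞` or `q = ∞`, where the corresponding integral/sum becomes a supremum). -/
def amalgamNorm (α : ℝ) (p q : ℝ≥0∞) {E : Type*} [NormedAddCommGroup E] (f : ℝ → E) : ℝ≥0∞ :=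
  let A : ℕ → ℝ≥0∞ := fun n =>
    if p = ∞ then ⨆ x ∈ In n, (‖f x‖₊ : ℝ≥0∞)
    else ((wn α n)⁻¹ * ∫⁻ x in In n, (‖f x‖₊ : ℝ≥0∞) ^ p.toReal ∂(omegaM α)) ^ (1/p.toReal)
  if q = ∞ then ⨆ n, A n
  else (∑' n, wn α n * (A n) ^ q.toReal) ^ (1/q.toReal)

/-- The constant `C_Γ = Γ(α+1)/(Γ(1/2)·Γ(α+1/2)·2^(2α-1))`. -/
def CGamma (α : ℝ) : ℝ :=
  Real.Gamma (α+1) / (Real.Gamma (1/2) * Real.Gamma (α+1/2) * (2:ℝ) ^ (2*α-1))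

/-- The Bessel–Kingman kernel `K_α(x,y,z)`. -/
def Kker (α x y z : ℝ) : ℝ :=
  CGamma α * ((z^2 - (x-y)^2) * ((x+y)^2 - z^2)) ^ (α - 1/2) / (x*y*z) ^ (2*α)

/-- The hypergroup translation `τ_y f(x)`, with the conventions `τ_0 f = f` and
`τ_y f(0) = f(y)`. -/
def tau {E : Type*} [NormedAddCommGroup E] [NormedSpace ℝ E]
    (α y : ℝ) (f : ℝ → E) (x : ℝ) : E :=
  if y = 0 then f x
  else if x = 0 then f y
  else ∫ z in |x - y|..(x + y), (Kker α x y z * z ^ (2*α+1)) • f z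

/-- The hypergroup convolution `(f ⊛ g)(x) = ∫_0^∞ f(y)·τ_y g(x)·y^(2α+1) dy`. -/
def convBK (α : ℝ) (f g : ℝ → ℂ) (x : ℝ) : ℂ :=
  ∫ y in Set.Ioi (0:ℝ), (y ^ (2*α+1)) • (f y * tau α y g x)

/-- The modified Bessel function `j_α`. -/
def jBessel (α x : ℝ) : ℝ :=
  ∑' k : ℕ, (-1)^k * Real.Gamma (α+1) / (2^(2*k) * (k.factorial : ℝ) * Real.Gamma (α + k + 1))
    * x^(2*k)

/-- The hypergroup Fourier transform `f̂(λ) = ∫_0^∞ f(x)·j_α(λx)·x^(2α+1) dx`. -/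
def fourierBK (α : ℝ) (f : ℝ → ℂ) (lam : ℝ) : ℂ :=
  ∫ x in Set.Ioi (0:ℝ), (jBessel α (lam * x) * x ^ (2*α+1)) • f x

/-- The continuous `(p,∞)`-amalgam norm
`sup_{y ≥ 0} (∫_0^∞ |f(x)|^p · τ_y 1_{[0,1]}(x) · x^(2α+1) dx)^(1/p)`. -/
def contNorm (α p : ℝ) {E : Type*} [NormedAddCommGroup E] (f : ℝ → E) : ℝ≥0∞ :=
  ⨆ y ∈ Set.Ici (0:ℝ),
    (∫⁻ x, (‖f x‖₊ : ℝ≥0∞) ^ p *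
        ENNReal.ofReal (tau α y ((Set.Icc (0:ℝ) 1).indicator 1) x) ∂(omegaM α)) ^ (1/p)

/-- The weight `ω_n = ∫_{n-1}^{n} z^(2α+1) dz`, as a real number. -/
def wIn (α : ℝ) (n : ℕ) : ℝ := ∫ z in ((n:ℝ)-1)..(n:ℝ), z ^ (2*α+1)

/-! On `[|x - y|, x + y]` the density `K_α(x, y, z) z^(2α+1)` integrates to `1`: the substitution
`u = z²` turns the integral into the Beta integral
`∫_{a²}^{b²} ((u - a²)(b² - u))^(α - 1/2) du = (4xy)^(2α) Γ(α + 1/2)² / Γ(2α + 1)`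
(with `a = |x - y|`, `b = x + y`), and Legendre's duplication formula cancels this against `C_Γ`.
Hence `τ_x f(y) = c` whenever `f ≡ c` on `[|x - y|, x + y]`. For `y ∈ [0, 1]` and `x` in the stated
interval this support lies in `[0, 2]`, resp. `[n - 2, n + 1]`, so the translated indicator is `1`
on `[0, 1]` and its average is `ω₁ / ω₁ = 1`. -/

theorem integral_rpow_mul_one_sub_rpow {p q : ℝ} (hp : 0 < p) (hq : 0 < q) :
    ∫ t in (0:ℝ)..1, t ^ (p - 1) * (1 - t) ^ (q - 1)
      = Real.Gamma p * Real.Gamma q / Real.Gamma (p + q) := by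
  have h := Complex.betaIntegral_eq_Gamma_mul_div p q (by simpa) (by simpa)
  have hreal : Complex.betaIntegral p q
      = ((∫ t in (0:ℝ)..1, t ^ (p - 1) * (1 - t) ^ (q - 1) : ℝ) : ℂ) := by
    rw [Complex.betaIntegral, ← intervalIntegral.integral_ofReal]
    refine intervalIntegral.integral_congr fun t ht => ?_
    rw [uIcc_of_le zero_le_one] at ht
    push_cast
    rw [Complex.ofReal_cpow ht.1, Complex.ofReal_cpow (sub_nonneg.2 ht.2)]
    push_cast
    rfl
  rw [hreal, ← Complex.ofReal_add] at h
  simp only [Complex.Gamma_ofReal] at h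
  exact_mod_cast h

theorem integral_sub_rpow_mul_sub_rpow {A B p q : ℝ} (hAB : A < B) (hp : 0 < p) (hq : 0 < q) :
    ∫ u in A..B, (u - A) ^ (p - 1) * (B - u) ^ (q - 1)
      = (B - A) ^ (p + q - 1) * (Real.Gamma p * Real.Gamma q / Real.Gamma (p + q)) := by
  have hL : 0 < B - A := sub_pos.2 hAB
  have h := intervalIntegral.integral_comp_mul_add
    (fun u => (u - A) ^ (p - 1) * (B - u) ^ (q - 1)) hL.ne' A (a := 0) (b := 1)
  simp only [mul_zero, zero_add, mul_one, sub_add_cancel, smul_eq_mul] at h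
  rw [eq_inv_mul_iff_mul_eq₀ hL.ne'] at h
  rw [← h, ← integral_rpow_mul_one_sub_rpow hp hq, ← intervalIntegral.integral_const_mul,
    ← intervalIntegral.integral_const_mul]
  refine intervalIntegral.integral_congr fun t ht => ?_
  rw [uIcc_of_le zero_le_one] at ht
  have hsplit : (B - A) ^ (p + q - 1) = (B - A) * ((B - A) ^ (p - 1) * (B - A) ^ (q - 1)) := by
    rw [show p + q - 1 = 1 + (p - 1) + (q - 1) by ring, Real.rpow_add hL, Real.rpow_add hL,
      Real.rpow_one, mul_assoc]
  rw [show (B - A) * t + A - A = (B - A) * t by ring,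
    show B - ((B - A) * t + A) = (B - A) * (1 - t) by ring,
    Real.mul_rpow hL.le ht.1, Real.mul_rpow hL.le (sub_nonneg.2 ht.2), hsplit]
  ring

theorem integral_comp_sq_mul {g : ℝ → ℝ} (hg : Continuous g) (a b : ℝ) :
    ∫ z in a..b, g (z ^ 2) * z = (1 / 2) * ∫ u in a ^ 2..b ^ 2, g u := by
  have h := intervalIntegral.integral_deriv_smul_comp (a := a) (b := b) (g := g)
    (f' := fun z => 2 * z) (fun z _ => by simpa [mul_comm] using hasDerivAt_pow 2 z)
    (continuous_const.mul continuous_id).continuousOn hg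
  rw [← h, ← intervalIntegral.integral_const_mul]
  refine intervalIntegral.integral_congr fun z _ => ?_
  simp only [Function.comp_apply, smul_eq_mul]
  ring

theorem CGamma_mul_four_rpow_mul {α : ℝ} (hα : -1/2 < α) :
    CGamma α * ((4:ℝ) ^ (2*α) * (Real.Gamma (α + 1/2) ^ 2 / Real.Gamma (2*α + 1))) = 2 := by
  have hdup := Real.Gamma_mul_Gamma_add_half (α + 1/2)
  rw [show α + 1/2 + 1/2 = α + 1 by ring, show 2 * (α + 1/2) = 2*α + 1 by ring,
    show 1 - (2*α + 1) = -(2*α) by ring] at hdup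
  have hpow : (4:ℝ) ^ (2*α) = 2 ^ (2*α - 1) * 2 * 2 ^ (2*α) := by
    rw [← Real.rpow_add_one two_ne_zero, ← Real.rpow_add two_pos,
      show (4:ℝ) = 2 ^ (2:ℝ) by norm_num, ← Real.rpow_mul zero_le_two]
    ring_nf
  have hinv : (2:ℝ) ^ (2*α) * 2 ^ (-(2*α)) = 1 := by
    rw [← Real.rpow_add two_pos, add_neg_cancel, Real.rpow_zero]
  have hG : Real.Gamma (α + 1/2) ≠ 0 := (Real.Gamma_pos_of_pos (by linarith)).ne'
  have hG2 : Real.Gamma (2*α + 1) ≠ 0 := (Real.Gamma_pos_of_pos (by linarith)).ne'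
  have h2 : (2:ℝ) ^ (2*α - 1) ≠ 0 := (Real.rpow_pos_of_pos two_pos _).ne'
  rw [CGamma, Real.Gamma_one_half_eq, hpow]
  generalize Real.Gamma (α + 1/2) = G at *
  generalize Real.Gamma (2*α + 1) = G2 at *
  generalize (2:ℝ) ^ (2*α) = P at *
  field_simp
  linear_combination P * hdup + G2 * √π * hinv

theorem integral_Kker_mul_rpow {α x y : ℝ} (hα : 1/2 ≤ α) (hx : 0 < x) (hy : 0 < y) :
    ∫ z in |x - y|..(x + y), Kker α x y z * z ^ (2*α + 1) = 1 := by
  set a := |x - y|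
  set b := x + y
  have ha : 0 ≤ a := abs_nonneg _
  have hab : a < b := abs_sub_lt_iff.2 ⟨by linarith, by linarith⟩
  have hxy : 0 < x * y := mul_pos hx hy
  have hsq : (x - y) ^ 2 = a ^ 2 := (sq_abs _).symm
  set g : ℝ → ℝ := fun u => (u - a ^ 2) ^ (α + 1/2 - 1) * (b ^ 2 - u) ^ (α + 1/2 - 1)
  have hg : Continuous g := by
    have := Real.continuous_rpow_const (q := α + 1/2 - 1) (by linarith)
    exact (this.comp (continuous_id.sub continuous_const)).mul
      (this.comp (continuous_const.sub continuous_id))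
  have hK : ∀ z ∈ Ioc a b,
      Kker α x y z * z ^ (2*α + 1) = CGamma α / (x * y) ^ (2*α) * (g (z ^ 2) * z) := by
    intro z ⟨haz, hzb⟩
    have hz : 0 < z := ha.trans_lt haz
    have hza2 : 0 ≤ z ^ 2 - a ^ 2 := sub_nonneg.2 (pow_le_pow_left₀ ha haz.le 2)
    have hzb2 : 0 ≤ b ^ 2 - z ^ 2 := sub_nonneg.2 (pow_le_pow_left₀ hz.le hzb 2)
    have hzα : z ^ (2*α) ≠ 0 := (Real.rpow_pos_of_pos hz _).ne'
    rw [Kker, hsq, Real.mul_rpow hza2 hzb2, Real.mul_rpow hxy.le hz.le,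
      Real.rpow_add hz, Real.rpow_one, show α - 1/2 = α + 1/2 - 1 by ring]
    simp only [g]
    field_simp
  have hba : b ^ 2 - a ^ 2 = 4 * (x * y) := by rw [← hsq]; ring
  have hxyα : (x * y) ^ (2*α) ≠ 0 := (Real.rpow_pos_of_pos hxy _).ne'
  calc ∫ z in a..b, Kker α x y z * z ^ (2*α + 1)
      = CGamma α / (x * y) ^ (2*α) * ∫ z in a..b, g (z ^ 2) * z := by
        rw [← intervalIntegral.integral_const_mul]
        exact intervalIntegral.integral_congr_ae
          (ae_of_all _ fun z hz => hK z (by rwa [uIoc_of_le hab.le] at hz))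
    _ = CGamma α / (x * y) ^ (2*α) * (1/2 * ((4 * (x * y)) ^ (2*α)
          * (Real.Gamma (α + 1/2) ^ 2 / Real.Gamma (2*α + 1)))) := by
        rw [integral_comp_sq_mul hg, integral_sub_rpow_mul_sub_rpow
          (pow_lt_pow_left₀ hab ha two_ne_zero) (by linarith) (by linarith), hba,
          show α + 1/2 + (α + 1/2) - 1 = 2*α by ring, show α + 1/2 + (α + 1/2) = 2*α + 1 by ring,
          sq]
    _ = CGamma α * ((4:ℝ) ^ (2*α) * (Real.Gamma (α + 1/2) ^ 2 / Real.Gamma (2*α + 1))) / 2 := by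
        rw [Real.mul_rpow (by norm_num) hxy.le]
        field_simp
    _ = 1 := by
        rw [CGamma_mul_four_rpow_mul (by linarith)]
        norm_num

theorem tau_eq_of_forall_mem_Icc {E : Type*} [NormedAddCommGroup E] [NormedSpace ℝ E]
    [CompleteSpace E] {α x y : ℝ} {f : ℝ → E} {c : E} (hα : 1/2 ≤ α) (hx : 0 ≤ x) (hy : 0 ≤ y)
    (hf : ∀ z ∈ Icc |x - y| (x + y), f z = c) :
    tau α y f x = c := by
  rw [tau]
  split_ifs with hy0 hx0
  · exact hf x (by simp [hy0, abs_of_nonneg hx])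
  · exact hf y (by simp [hx0, abs_of_nonneg hy])
  · have hab : |x - y| ≤ x + y := abs_sub_le_iff.2 ⟨by linarith, by linarith⟩
    rw [intervalIntegral.integral_congr (g := fun z => (Kker α x y z * z ^ (2*α + 1)) • c)
        fun z hz => by rw [hf z (by rwa [uIcc_of_le hab] at hz)],
      intervalIntegral.integral_smul_const,
      integral_Kker_mul_rpow hα (hx.lt_of_ne' hx0) (hy.lt_of_ne' hy0),
      one_smul]

theorem tau_indicator_Icc_eq_one {α x y A B : ℝ} (hα : 1/2 ≤ α) (hx : 0 ≤ x) (hy : 0 ≤ y)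
    (hA : A ≤ |x - y|) (hB : x + y ≤ B) :
    tau α y ((Icc A B).indicator (1 : ℝ → ℝ)) x = 1 :=
  tau_eq_of_forall_mem_Icc hα hx hy fun z hz => by
    rw [indicator_of_mem (show z ∈ Icc A B from ⟨hA.trans hz.1, hz.2.trans hB⟩), Pi.one_apply]

theorem wIn_one {α : ℝ} (hα : -1 < α) : wIn α 1 = 1 / (2*α + 2) := by
  rw [wIn, Nat.cast_one, sub_self, integral_rpow (Or.inl (by linarith)), Real.one_rpow,
    Real.zero_rpow (by linarith)]
  ring

theorem one_div_wIn_one_mul_integral_eq_one {α : ℝ} (hα : -1 < α) {g : ℝ → ℝ}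
    (hg : ∀ y ∈ Icc (0:ℝ) 1, g y = 1) :
    1 / wIn α 1 * ∫ y in (0:ℝ)..1, g y * y ^ (2*α + 1) = 1 := by
  have hw : wIn α 1 ≠ 0 := by
    rw [wIn_one hα]; exact (one_div_pos.2 (by linarith)).ne'
  rw [intervalIntegral.integral_congr (g := fun y => y ^ (2*α + 1)) fun y hy => by
      rw [hg y (by rwa [uIcc_of_le zero_le_one] at hy), one_mul]]
  have hint : ∫ y in (0:ℝ)..1, y ^ (2*α + 1) = wIn α 1 := by rw [wIn, Nat.cast_one, sub_self]
  rw [hint, one_div_mul_cancel hw]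

/-- The averaged translated indicators `g_n = (1/ω₁)·1_{I₁} ⊛ 1_{[n-2,n+1]}` are
identically `1` on `I_n`. -/
theorem averaged_translates_eq_one (α : ℝ) (hα : 1/2 ≤ α) :
    (∀ x ∈ Set.Ico (0:ℝ) 1,
      (1 / wIn α 1) *
        ∫ y in (0:ℝ)..1, tau α x ((Set.Icc (0:ℝ) 2).indicator (1 : ℝ → ℝ)) y * y ^ (2*α+1)
        = 1) ∧
    ∀ n : ℕ, 2 ≤ n → ∀ x ∈ Set.Ico ((n:ℝ) - 1) (n:ℝ),
      (1 / wIn α 1) *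
        ∫ y in (0:ℝ)..1,
          tau α x ((Set.Icc ((n:ℝ) - 2) ((n:ℝ) + 1)).indicator (1 : ℝ → ℝ)) y * y ^ (2*α+1)
        = 1 := by
  constructor
  · intro x ⟨hx0, hx1⟩
    exact one_div_wIn_one_mul_integral_eq_one (by linarith) fun y ⟨hy0, hy1⟩ =>
      tau_indicator_Icc_eq_one hα hy0 hx0 (abs_nonneg _) (by linarith)
  · intro n hn x ⟨hxn, hxn'⟩
    have hn2 : (2:ℝ) ≤ n := by exact_mod_cast hn
    exact one_div_wIn_one_mul_integral_eq_one (by linarith) fun y ⟨hy0, hy1⟩ =>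
      tau_indicator_Icc_eq_one hα hy0 (by linarith)
        (by rw [abs_sub_comm]; linarith [le_abs_self (x - y)]) (by linarith)
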